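/- Let m ≥ 0 and let f : ℝ² → ℍ be integrable and have partial derivatives with respect to the first variable s in the L¹ norm of all orders ≤ m, with g = ∂^m f / ∂s^m denoting the m-fold L¹-norm partial derivative with respect to s. Then the left-sided quaternion Fourier transforms satisfy 𝓖_L(u,v) = (i u)^m 𝓕_L(u,v) for all (u,v) ∈ ℝ². -/

import Mathlib

/-!
Because the `i`-exponential stands leftmost in the left-sided kernel, translating `f` by `h` in
`s` multiplies its transform on the left by `e^{iuh}`, although quaternions do not commute. So
the transform of the difference quotient `(f(s+h,t) - f(s,t))/h` is `(e^{iuh} - 1)/h · 𝓕_L`,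
which tends to `iu 𝓕_L`. The kernel has norm one, so `L¹` convergence of the difference
quotients to `∂f/∂s` makes their transforms converge to the transform of `∂f/∂s`. Induct on `m`.
-/

open MeasureTheory Filter Real Set
open scoped Quaternion Topology

noncomputable section

def qi : ℍ[ℝ] := ⟨0,1,0,0⟩
def qj : ℍ[ℝ] := ⟨0,0,1,0⟩

/-- `e^{μθ} = cos θ + μ sin θ` for a (pure unit) quaternion `μ`. -/
def qexp (μ : ℍ[ℝ]) (θ : ℝ) : ℍ[ℝ] := (Real.cos θ : ℍ[ℝ]) + Real.sin θ • μ

/-- Left-sided quaternion Fourier transform. -/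
def QFT_L (f : ℝ × ℝ → ℍ[ℝ]) (u v : ℝ) : ℍ[ℝ] :=
  ∫ p : ℝ × ℝ, qexp qi (-(u * p.1)) * qexp qj (-(v * p.2)) * f p

/-- `g` is the partial derivative of `f` with respect to the first variable in the `L¹` norm. -/
def L1PartialDerivS (f g : ℝ × ℝ → ℍ[ℝ]) : Prop :=
  Tendsto (fun h : ℝ => ∫ p : ℝ × ℝ, ‖h⁻¹ • (f (p.1 + h, p.2) - f p) - g p‖)
    (𝓝[≠] (0:ℝ)) (𝓝 0)

section QuaternionExp

variable {μ : ℍ[ℝ]}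

lemma qexp_zero (μ : ℍ[ℝ]) : qexp μ 0 = 1 := by simp [qexp]

lemma qexp_add (hμ : μ * μ = -1) (a b : ℝ) : qexp μ (a + b) = qexp μ a * qexp μ b := by
  have hprod : qexp μ a * qexp μ b
      = ((cos a * cos b - sin a * sin b : ℝ) : ℍ[ℝ]) + (sin a * cos b + cos a * sin b) • μ := by
    simp only [qexp, add_mul, mul_add, Quaternion.coe_mul_eq_smul, Quaternion.mul_coe_eq_smul,
      smul_mul_smul_comm, hμ, smul_smul, smul_neg]
    ext <;> simp <;> ring
  rw [hprod, qexp, cos_add, sin_add]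

lemma star_qexp (hre : μ.re = 0) (θ : ℝ) : star (qexp μ θ) = qexp μ (-θ) := by
  simp [qexp, Quaternion.star_eq_neg.mpr hre]

lemma norm_qexp (hre : μ.re = 0) (hμ : μ * μ = -1) (θ : ℝ) : ‖qexp μ θ‖ = 1 := by
  have h := Quaternion.self_mul_star (qexp μ θ)
  rw [star_qexp hre, ← qexp_add hμ, add_neg_cancel, qexp_zero, ← Quaternion.coe_one,
    Quaternion.coe_inj, Quaternion.normSq_eq_norm_mul_self] at h
  nlinarith [norm_nonneg (qexp μ θ)]

lemma qexp_eq_smul_one_add_smul (μ : ℍ[ℝ]) :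
    qexp μ = fun θ => cos θ • (1 : ℍ[ℝ]) + sin θ • μ := by
  funext θ
  ext <;> simp [qexp]

@[fun_prop]
lemma continuous_qexp (μ : ℍ[ℝ]) : Continuous (qexp μ) := by
  rw [qexp_eq_smul_one_add_smul]
  fun_prop

lemma hasDerivAt_qexp_zero (μ : ℍ[ℝ]) : HasDerivAt (qexp μ) μ 0 := by
  have h := ((hasDerivAt_cos 0).smul_const (1 : ℍ[ℝ])).add ((hasDerivAt_sin 0).smul_const μ)
  rw [sin_zero, cos_zero, neg_zero, zero_smul, one_smul, zero_add] at h
  rw [qexp_eq_smul_one_add_smul]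
  exact h

lemma tendsto_slope_qexp_mul (μ : ℍ[ℝ]) (u : ℝ) :
    Tendsto (fun h : ℝ => h⁻¹ • (qexp μ (u * h) - 1)) (𝓝[≠] 0) (𝓝 (u • μ)) := by
  have hderiv : HasDerivAt (fun h : ℝ => qexp μ (u * h)) (u • μ) 0 := by
    have hlin : HasDerivAt (fun h : ℝ => u * h) u 0 := by
      simpa using (hasDerivAt_id (0 : ℝ)).const_mul u
    exact (hasDerivAt_qexp_zero μ).scomp_of_eq 0 hlin (mul_zero u).symm
  refine (hasDerivAt_iff_tendsto_slope.mp hderiv).congr fun h => ?_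
  simp [slope_def_module, qexp_zero]

end QuaternionExp

lemma qi_mul_self : qi * qi = -1 := by
  ext <;> simp only [Quaternion.re_mul, Quaternion.imI_mul, Quaternion.imJ_mul,
    Quaternion.imK_mul] <;> simp [qi]

lemma qj_mul_self : qj * qj = -1 := by
  ext <;> simp only [Quaternion.re_mul, Quaternion.imI_mul, Quaternion.imJ_mul,
    Quaternion.imK_mul] <;> simp [qj]

section KernelIntegrals

variable {α A : Type*} [MeasurableSpace α] {μ : Measure α} [NormedRing A] [NormedSpace ℝ A]

lemma tendsto_integral_mul_of_tendsto_integral_norm_sub {ι : Type*} {l : Filter ι}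
    {K g : α → A} {F : ι → α → A} {C : ℝ} (hK : AEStronglyMeasurable K μ)
    (hKC : ∀ᵐ x ∂μ, ‖K x‖ ≤ C) (hF : ∀ i, Integrable (F i) μ) (hg : Integrable g μ)
    (hFg : Tendsto (fun i => ∫ x, ‖F i x - g x‖ ∂μ) l (𝓝 0)) :
    Tendsto (fun i => ∫ x, K x * F i x ∂μ) l (𝓝 (∫ x, K x * g x ∂μ)) := by
  rw [tendsto_iff_norm_sub_tendsto_zero]
  have hbound : ∀ i, ‖∫ x, K x * F i x ∂μ - ∫ x, K x * g x ∂μ‖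
      ≤ C * ∫ x, ‖F i x - g x‖ ∂μ := fun i => by
    rw [← integral_sub ((hF i).bdd_mul hK hKC) (hg.bdd_mul hK hKC), ← integral_const_mul]
    refine norm_integral_le_of_norm_le (((hF i).sub hg).norm.const_mul C) ?_
    filter_upwards [hKC] with x hx
    rw [← mul_sub]
    exact (norm_mul_le _ _).trans (mul_le_mul_of_nonneg_right hx (norm_nonneg _))
  exact squeeze_zero (fun i => norm_nonneg _) hbound (by simpa using hFg.const_mul C)

variable [IsScalarTower ℝ A A] [SMulCommClass ℝ A A]

lemma integral_mul_comp_add_right {G : Type*} [AddGroup G] [MeasurableSpace G]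
    [MeasurableAdd G] {ν : Measure G} [ν.IsAddRightInvariant] {K f : G → A} {a : G} {c : A}
    (hK : ∀ x, K (x - a) = c * K x) (hKf : Integrable (fun x => K x * f x) ν) :
    ∫ x, K x * f (x + a) ∂ν = c * ∫ x, K x * f x ∂ν := by
  calc ∫ x, K x * f (x + a) ∂ν = ∫ x, K (x + a - a) * f (x + a) ∂ν := by simp
    _ = ∫ x, K (x - a) * f x ∂ν := integral_add_right_eq_self (fun x => K (x - a) * f x) a
    _ = c * ∫ x, K x * f x ∂ν := by
      simp_rw [hK, mul_assoc]
      exact integral_const_mul_of_integrable hKf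

end KernelIntegrals

lemma Prod.mk_fst_add {M N : Type*} [Add M] [AddZeroClass N] (p : M × N) (h : M) :
    (p.1 + h, p.2) = p + (h, 0) := by
  ext <;> simp

lemma integrable_comp_add_fst {E : Type*} [NormedAddCommGroup E] {f : ℝ × ℝ → E}
    (hf : Integrable f) (h : ℝ) : Integrable (fun p : ℝ × ℝ => f (p.1 + h, p.2)) := by
  simpa only [Prod.mk_fst_add] using hf.comp_add_right (h, 0)

section LeftSidedQFT

def qftKernel (u v : ℝ) (p : ℝ × ℝ) : ℍ[ℝ] := qexp qi (-(u * p.1)) * qexp qj (-(v * p.2))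

variable {f g : ℝ × ℝ → ℍ[ℝ]} (u v : ℝ)

lemma QFT_L_eq_integral_qftKernel_mul : QFT_L f u v = ∫ p, qftKernel u v p * f p := rfl

lemma continuous_qftKernel : Continuous (qftKernel u v) := by
  unfold qftKernel
  fun_prop

lemma norm_qftKernel (p : ℝ × ℝ) : ‖qftKernel u v p‖ = 1 := by
  rw [qftKernel, norm_mul, norm_qexp rfl qi_mul_self, norm_qexp rfl qj_mul_self, one_mul]

lemma integrable_qftKernel_mul (hf : Integrable f) :
    Integrable (fun p => qftKernel u v p * f p) :=
  hf.bdd_mul (continuous_qftKernel u v).aestronglyMeasurable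
    (ae_of_all _ fun p => (norm_qftKernel u v p).le)

lemma qftKernel_sub_fst (h : ℝ) (p : ℝ × ℝ) :
    qftKernel u v (p - (h, 0)) = qexp qi (u * h) * qftKernel u v p := by
  have hphase : -(u * (p - (h, 0)).1) = u * h + -(u * p.1) := by
    rw [Prod.fst_sub]
    ring
  rw [qftKernel, hphase, qexp_add qi_mul_self, Prod.snd_sub, sub_zero, mul_assoc, qftKernel]

lemma QFT_L_comp_add_fst (hf : Integrable f) (h : ℝ) :
    QFT_L (fun p => f (p.1 + h, p.2)) u v = qexp qi (u * h) * QFT_L f u v := by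
  simp only [QFT_L_eq_integral_qftKernel_mul, Prod.mk_fst_add]
  exact integral_mul_comp_add_right (qftKernel_sub_fst u v h) (integrable_qftKernel_mul u v hf)

lemma QFT_L_slope_fst (hf : Integrable f) (h : ℝ) :
    QFT_L (fun p => h⁻¹ • (f (p.1 + h, p.2) - f p)) u v
      = h⁻¹ • (qexp qi (u * h) - 1) * QFT_L f u v := by
  have hshift := integrable_comp_add_fst hf h
  simp only [QFT_L_eq_integral_qftKernel_mul, mul_smul_comm, mul_sub]
  rw [integral_smul, integral_sub (integrable_qftKernel_mul u v hshift)
    (integrable_qftKernel_mul u v hf), ← QFT_L_eq_integral_qftKernel_mul,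
    QFT_L_comp_add_fst u v hf, ← QFT_L_eq_integral_qftKernel_mul, smul_mul_assoc, sub_mul,
    one_mul]

lemma QFT_L_of_L1PartialDerivS (hf : Integrable f) (hg : Integrable g)
    (hfg : L1PartialDerivS f g) : QFT_L g u v = u • qi * QFT_L f u v := by
  have hquot : Tendsto (fun h : ℝ => QFT_L (fun p => h⁻¹ • (f (p.1 + h, p.2) - f p)) u v)
      (𝓝[≠] 0) (𝓝 (QFT_L g u v)) :=
    tendsto_integral_mul_of_tendsto_integral_norm_sub
      (continuous_qftKernel u v).aestronglyMeasurable
      (ae_of_all _ fun p => (norm_qftKernel u v p).le)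
      (fun h => ((integrable_comp_add_fst hf h).sub hf).smul h⁻¹) hg hfg
  simp only [QFT_L_slope_fst u v hf] at hquot
  exact tendsto_nhds_unique hquot ((tendsto_slope_qexp_mul qi u).mul_const _)

end LeftSidedQFT

theorem qft_left_sided_iterated_deriv_s_general
    (m : ℕ) (f : ℝ × ℝ → ℍ[ℝ])
    (D : ℕ → (ℝ × ℝ → ℍ[ℝ])) (hD0 : D 0 = f)
    (hInt : ∀ k ≤ m, Integrable (D k))
    (hDs : ∀ k < m, L1PartialDerivS (D k) (D (k + 1))) :
    ∀ u v : ℝ, QFT_L (D m) u v = (u • qi) ^ m * QFT_L f u v := by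
  intro u v
  subst hD0
  suffices ∀ k ≤ m, QFT_L (D k) u v = (u • qi) ^ k * QFT_L (D 0) u v from this m le_rfl
  intro k hk
  induction k with
  | zero => rw [pow_zero, one_mul]
  | succ k ih =>
    rw [QFT_L_of_L1PartialDerivS u v (hInt k (by omega)) (hInt (k + 1) hk) (hDs k hk),
      ih (by omega), ← mul_assoc, ← pow_succ']

/-- The left-sided QFT of the `m`-fold `L¹`-norm partial derivative `∂^m f/∂s^m`
equals `(iu)^m 𝓕_L(u,v)`. -/
theorem qft_left_sided_iterated_deriv_s
    (m : ℕ) (f : ℝ × ℝ → ℍ[ℝ]) (hf : Integrable f)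
    (D : ℕ → (ℝ × ℝ → ℍ[ℝ])) (hD0 : D 0 = f)
    (hInt : ∀ k ≤ m, Integrable (D k))
    (hDs : ∀ k < m, L1PartialDerivS (D k) (D (k + 1))) :
    ∀ u v : ℝ, QFT_L (D m) u v = (u • qi) ^ m * QFT_L f u v :=
  qft_left_sided_iterated_deriv_s_general m f D hD0 hInt hDs
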